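/- arXiv:2110.15837 — 2 statements merged into one kernel-verified Lean document; each statement's English description precedes it below -/
import Mathlib

section
/- Let γ be a self-conjugate partition corresponding to the partition λ = (λ₁,…,λ_k) into distinct odd parts. For any box (i,j) in the Young diagram of γ with j ≤ i ≤ k (inside the Durfee square), the hook length satisfies h_γ(i,j) = (λ_i + λ_j)/2. -/
/-- Hook length of the (0-indexed) cell `(i, j)` of a Young diagram. -/
def hookLen (γ : YoungDiagram) (i j : ℕ) : ℕ :=
  γ.rowLen i + γ.colLen j - i - j - 1

/-- A partition (Young diagram) is `t`-core if no hook length is divisible by `t`. -/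
def IsTCore (γ : YoungDiagram) (t : ℕ) : Prop :=
  ∀ c ∈ γ.cells, ¬ t ∣ hookLen γ c.1 c.2

/-- The side length of the Durfee square: the number of diagonal cells. -/
def durfee (γ : YoungDiagram) : ℕ :=
  (γ.cells.filter fun c => c.1 = c.2).card

lemma diag_mem_of_lt_durfee (γ : YoungDiagram) {i : ℕ} (h : i < durfee γ) :
    (i, i) ∈ γ := by
  by_contra hni
  have hsub : (γ.cells.filter fun c => c.1 = c.2) ⊆
      (Finset.range i).image fun m => (m, m) := by
    intro c hc
    simp only [Finset.mem_filter, YoungDiagram.mem_cells] at hc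
    obtain ⟨hmem, heq⟩ := hc
    have hlt : c.1 < i := by
      by_contra hge
      exact hni (γ.up_left_mem (le_of_not_gt hge) (heq ▸ le_of_not_gt hge) hmem)
    simp only [Finset.mem_image, Finset.mem_range]
    exact ⟨c.1, hlt, by rw [Prod.ext_iff]; exact ⟨rfl, heq⟩⟩
  have := Finset.card_le_card hsub
  have hcard : ((Finset.range i).image fun m => (m, m)).card ≤ i := by
    simpa using Finset.card_image_le (s := Finset.range i) (f := fun m => (m, m))
  unfold durfee at h
  omega

theorem stmt2 (γ : YoungDiagram) (hsc : γ.transpose = γ) (k : ℕ) (hk : k = durfee γ)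
    (lam : ℕ → ℕ) (hlam : ∀ i < k, lam i = hookLen γ i i)
    (i j : ℕ) (hji : j ≤ i) (hik : i < k) :
    hookLen γ i j = (lam i + lam j) / 2 := by
  have hjk : j < k := lt_of_le_of_lt hji hik
  have hi : (i, i) ∈ γ := diag_mem_of_lt_durfee γ (hk ▸ hik)
  have hj : (j, j) ∈ γ := diag_mem_of_lt_durfee γ (hk ▸ hjk)
  have hri : i < γ.rowLen i := YoungDiagram.mem_iff_lt_rowLen.mp hi
  have hrj : j < γ.rowLen j := YoungDiagram.mem_iff_lt_rowLen.mp hj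
  have hcol : ∀ m, γ.colLen m = γ.rowLen m := fun m => by
    rw [← YoungDiagram.rowLen_transpose, hsc]
  rw [hlam i hik, hlam j hjk]
  unfold hookLen
  rw [hcol i, hcol j]
  omega
end

section
/- The number of self-conjugate 3-core partitions of n, sc₃(n), equals 1 if n = r(3r±2) for some r ≥ 1, and 0 otherwise. -/
namespace YoungDiagram

variable {γ μ : YoungDiagram}

theorem colLen_eq_rowLen_of_transpose_eq (h : γ.transpose = γ) (j : ℕ) :
    γ.colLen j = γ.rowLen j := by
  rw [← rowLen_transpose, h]

theorem rowLen_eq_of_forall_mem_iff {i n : ℕ} (h : ∀ j, (i, j) ∈ γ ↔ j < n) :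
    γ.rowLen i = n := by
  have h₁ := h (γ.rowLen i)
  have h₂ := h n
  rw [mem_iff_lt_rowLen] at h₁ h₂
  omega

noncomputable def removeFirstHook (γ : YoungDiagram) : YoungDiagram where
  cells := γ.cells.preimage (Prod.map (· + 1) (· + 1))
    ((add_left_injective 1).prodMap (add_left_injective 1)).injOn
  isLowerSet := by
    intro p q hqp hp
    simp only [Finset.mem_coe, Finset.mem_preimage, mem_cells] at hp ⊢
    exact γ.up_left_mem (by simpa using hqp.1) (by simpa using hqp.2) hp

@[simp]
theorem mem_removeFirstHook {i j : ℕ} :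
    (i, j) ∈ γ.removeFirstHook ↔ (i + 1, j + 1) ∈ γ := by
  rw [← mem_cells, removeFirstHook, mem_mk, Finset.mem_preimage]
  rfl

theorem rowLen_removeFirstHook (i : ℕ) : γ.removeFirstHook.rowLen i = γ.rowLen (i + 1) - 1 :=
  rowLen_eq_of_forall_mem_iff fun j => by
    rw [mem_removeFirstHook, mem_iff_lt_rowLen]
    omega

theorem transpose_removeFirstHook :
    γ.removeFirstHook.transpose = γ.transpose.removeFirstHook :=
  SetLike.ext fun ⟨i, j⟩ => by simp [mem_transpose]

theorem colLen_removeFirstHook (j : ℕ) : γ.removeFirstHook.colLen j = γ.colLen (j + 1) - 1 := by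
  rw [← rowLen_transpose, transpose_removeFirstHook, rowLen_removeFirstHook, rowLen_transpose]

theorem hookLen_removeFirstHook {i j : ℕ} (h : (i, j) ∈ γ.removeFirstHook) :
    hookLen γ.removeFirstHook i j = hookLen γ (i + 1) (j + 1) := by
  rw [mem_removeFirstHook] at h
  have hrow := mem_iff_lt_rowLen.mp h
  have hcol := mem_iff_lt_colLen.mp h
  rw [hookLen, hookLen, rowLen_removeFirstHook, colLen_removeFirstHook]
  omega

theorem ext_of_removeFirstHook (hrow : γ.rowLen 0 = μ.rowLen 0)
    (hcol : γ.colLen 0 = μ.colLen 0) (h : γ.removeFirstHook = μ.removeFirstHook) : γ = μ := by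
  refine SetLike.ext fun ⟨i, j⟩ => ?_
  rcases i with _ | i
  · rw [mem_iff_lt_rowLen, mem_iff_lt_rowLen, hrow]
  rcases j with _ | j
  · rw [mem_iff_lt_colLen, mem_iff_lt_colLen, hcol]
  · simpa only [mem_removeFirstHook] using SetLike.ext_iff.mp h (i, j)

theorem card_removeFirstHook_add_rowLen_add_colLen (h : (0, 0) ∈ γ) :
    γ.removeFirstHook.cells.card + γ.rowLen 0 + γ.colLen 0 = γ.cells.card + 1 := by
  classical
  have hhook : {p ∈ γ.cells | p ∉ Set.range (Prod.map (· + 1) (· + 1))} =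
      γ.row 0 ∪ γ.col 0 := by
    ext ⟨i, j⟩
    simp only [Finset.mem_filter, Set.mem_range, Prod.map_apply, Prod.ext_iff, Prod.exists,
      not_exists, Finset.mem_union, mem_row_iff, mem_col_iff, mem_cells]
    constructor
    · rintro ⟨hm, hne⟩
      refine Or.imp (⟨hm, ·⟩) (⟨hm, ·⟩) ?_
      by_contra! hij
      exact hne (i - 1) (j - 1) ⟨by omega, by omega⟩
    · rintro (⟨hm, rfl⟩ | ⟨hm, rfl⟩) <;> exact ⟨hm, by omega⟩
  have hcorner : γ.row 0 ∩ γ.col 0 = {(0, 0)} := by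
    ext ⟨i, j⟩
    simp only [Finset.mem_inter, mem_row_iff, mem_col_iff, Finset.mem_singleton, Prod.ext_iff]
    constructor
    · rintro ⟨⟨_, rfl⟩, _, rfl⟩; exact ⟨rfl, rfl⟩
    · rintro ⟨rfl, rfl⟩; exact ⟨⟨h, rfl⟩, h, rfl⟩
  rw [removeFirstHook, Finset.card_preimage, rowLen_eq_card, colLen_eq_card, add_assoc,
    ← Finset.card_union_add_card_inter, hcorner, ← hhook, Finset.card_singleton, ← add_assoc,
    Finset.card_filter_add_card_filter_not]

end YoungDiagram

theorem IsTCore.removeFirstHook {γ : YoungDiagram} {t : ℕ} (h : IsTCore γ t) :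
    IsTCore γ.removeFirstHook t := by
  rintro ⟨i, j⟩ hc
  rw [YoungDiagram.mem_cells] at hc
  rw [YoungDiagram.hookLen_removeFirstHook hc]
  exact h (i + 1, j + 1) (YoungDiagram.mem_removeFirstHook.mp hc)

open YoungDiagram

/-- The diagram `Γ_L`: row `i` has length `L - 2i` while `3i < L`, and the remaining rows are
the transpose of these. -/
def selfConjThreeCore (L : ℕ) : YoungDiagram where
  cells := (Finset.range L ×ˢ Finset.range L).filter fun p =>
    (3 * p.1 < L ∧ 2 * p.1 + p.2 < L) ∨ (3 * p.2 < L ∧ 2 * p.2 + p.1 < L)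
  isLowerSet := by
    intro p q hqp hp
    have := hqp.1
    have := hqp.2
    simp only [Finset.coe_filter, Finset.mem_product, Finset.mem_range,
      Set.mem_ofPred_eq] at hp ⊢
    omega

theorem mem_selfConjThreeCore {L i j : ℕ} :
    (i, j) ∈ selfConjThreeCore L ↔
      (3 * i < L ∧ 2 * i + j < L) ∨ (3 * j < L ∧ 2 * j + i < L) := by
  rw [← mem_cells]
  simp only [selfConjThreeCore, Finset.mem_filter, Finset.mem_product, Finset.mem_range]
  omega

theorem transpose_selfConjThreeCore (L : ℕ) :
    (selfConjThreeCore L).transpose = selfConjThreeCore L :=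
  SetLike.ext fun ⟨i, j⟩ => by
    rw [mem_transpose, Prod.swap_prod_mk, mem_selfConjThreeCore, mem_selfConjThreeCore]
    tauto

theorem rowLen_selfConjThreeCore (L i : ℕ) :
    (selfConjThreeCore L).rowLen i = if 3 * i < L then L - 2 * i else (L + 1 - i) / 2 :=
  rowLen_eq_of_forall_mem_iff fun j => by
    rw [mem_selfConjThreeCore]
    split_ifs <;> omega

theorem rowLen_zero_selfConjThreeCore (L : ℕ) : (selfConjThreeCore L).rowLen 0 = L := by
  rw [rowLen_selfConjThreeCore]
  split_ifs <;> omega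

theorem colLen_zero_selfConjThreeCore (L : ℕ) : (selfConjThreeCore L).colLen 0 = L := by
  rw [colLen_eq_rowLen_of_transpose_eq (transpose_selfConjThreeCore L),
    rowLen_zero_selfConjThreeCore]

theorem removeFirstHook_selfConjThreeCore (L : ℕ) :
    (selfConjThreeCore L).removeFirstHook = selfConjThreeCore (L - 3) :=
  SetLike.ext fun ⟨i, j⟩ => by
    rw [mem_removeFirstHook, mem_selfConjThreeCore, mem_selfConjThreeCore]
    omega

theorem isTCore_selfConjThreeCore {L : ℕ} (hL : L % 3 ≠ 2) :
    IsTCore (selfConjThreeCore L) 3 := by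
  rintro ⟨i, j⟩ hc
  rw [mem_cells, mem_selfConjThreeCore] at hc
  rw [hookLen, colLen_eq_rowLen_of_transpose_eq (transpose_selfConjThreeCore L),
    rowLen_selfConjThreeCore, rowLen_selfConjThreeCore]
  split_ifs <;> omega

theorem card_selfConjThreeCore_add {L : ℕ} (hL : 0 < L) :
    (selfConjThreeCore (L - 3)).cells.card + 2 * L = (selfConjThreeCore L).cells.card + 1 := by
  have h := card_removeFirstHook_add_rowLen_add_colLen
    (mem_selfConjThreeCore.mpr (Or.inl ⟨hL, hL⟩) : (0, 0) ∈ selfConjThreeCore L)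
  rw [removeFirstHook_selfConjThreeCore, rowLen_zero_selfConjThreeCore,
    colLen_zero_selfConjThreeCore] at h
  omega

theorem card_selfConjThreeCore_three_mul (r : ℕ) :
    (selfConjThreeCore (3 * r)).cells.card = r * (3 * r + 2) := by
  induction r with
  | zero => rfl
  | succ r ih =>
    have h := card_selfConjThreeCore_add (L := 3 * (r + 1)) (by omega)
    rw [show 3 * (r + 1) - 3 = 3 * r by omega, ih] at h
    linarith

theorem card_selfConjThreeCore_three_mul_add_one (r : ℕ) :
    (selfConjThreeCore (3 * r + 1)).cells.card = (r + 1) * (3 * r + 1) := by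
  induction r with
  | zero => rfl
  | succ r ih =>
    have h := card_selfConjThreeCore_add (L := 3 * (r + 1) + 1) (by omega)
    rw [show 3 * (r + 1) + 1 - 3 = 3 * r + 1 by omega, ih] at h
    linarith

theorem selfConjThreeCore_strictMono : StrictMono selfConjThreeCore :=
  strictMono_nat_of_lt_succ fun L => lt_of_le_of_ne
    (fun ⟨i, j⟩ hc => by rw [mem_selfConjThreeCore] at hc ⊢; omega)
    fun h => by
      have := SetLike.ext_iff.mp h (0, L)
      rw [mem_selfConjThreeCore, mem_selfConjThreeCore] at this
      omega

theorem card_selfConjThreeCore_injective :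
    Function.Injective fun L => (selfConjThreeCore L).cells.card :=
  (StrictMono.comp (fun _ _ h => Finset.card_lt_card (cells_ssubset_iff.mpr h))
    selfConjThreeCore_strictMono).injective

section Classification

variable {γ : YoungDiagram}

theorem rowLen_zero_mod_three_ne_two (hT : γ.transpose = γ) (hcore : IsTCore γ 3) :
    γ.rowLen 0 % 3 ≠ 2 := by
  rcases Nat.eq_zero_or_pos (γ.rowLen 0) with h | h
  · omega
  have := hcore (0, 0) ((mem_cells _).mpr (mem_iff_lt_rowLen.mpr h))
  dsimp only at this
  rw [hookLen, colLen_eq_rowLen_of_transpose_eq hT] at this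
  omega

theorem rowLen_zero_removeFirstHook_of_isTCore_three (hT : γ.transpose = γ)
    (hcore : IsTCore γ 3) : γ.removeFirstHook.rowLen 0 = γ.rowLen 0 - 3 := by
  have hT' : γ.removeFirstHook.transpose = γ.removeFirstHook := by
    rw [transpose_removeFirstHook, hT]
  set L := γ.rowLen 0
  set c := γ.removeFirstHook.rowLen 0
  have hLmod : L % 3 ≠ 2 := rowLen_zero_mod_three_ne_two hT hcore
  have hcmod : c % 3 ≠ 2 := rowLen_zero_mod_three_ne_two hT' hcore.removeFirstHook
  have hc : c = γ.rowLen 1 - 1 := rowLen_removeFirstHook 0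
  have hrow1 : γ.rowLen 1 ≤ L := γ.rowLen_anti 0 1 zero_le_one
  have hpos : ∀ k < L, 0 < γ.rowLen k := fun k hk => by
    rwa [← mem_iff_lt_rowLen, mem_iff_lt_colLen, colLen_eq_rowLen_of_transpose_eq hT]
  have hshort : ∀ k, c < k → γ.rowLen k ≤ 1 := fun k hk => by
    by_contra! h
    have hmem : (k - 1, 0) ∈ γ.removeFirstHook := by
      rw [mem_removeFirstHook, Nat.sub_add_cancel (by omega)]
      exact mem_iff_lt_rowLen.mpr h
    have := mem_iff_lt_colLen.mp hmem
    rw [colLen_eq_rowLen_of_transpose_eq hT'] at this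
    omega
  have hhook : ∀ k < L, ¬ 3 ∣ L + γ.rowLen k - k - 1 := fun k hk => by
    have := hcore (0, k) ((mem_cells _).mpr (mem_iff_lt_rowLen.mpr hk))
    rwa [hookLen, colLen_eq_rowLen_of_transpose_eq hT] at this
  -- a row of length one at index `L - 3` would give the cell `(0, L - 3)` hook length `3`
  have hL : L ≤ c + 3 := by
    by_contra! h
    have := hshort (L - 3) (by omega)
    have := hpos (L - 3) (by omega)
    have := hhook (L - 3) (by omega)
    omega
  -- the hooks of `(0, 0)` and `(0, 1)`, of lengths `2L - 1` and `L + c - 1`, exclude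
  -- `L = c + 1` (for `c > 0`) and `L = c + 2`
  have h₁ := hhook 1
  have hpos₁ := hpos 1
  obtain ⟨q, hq | hq⟩ : ∃ q, c = 3 * q ∨ c = 3 * q + 1 := ⟨c / 3, by omega⟩ <;> omega

theorem eq_selfConjThreeCore_of_isTCore_three (hT : γ.transpose = γ) (hcore : IsTCore γ 3) :
    γ = selfConjThreeCore (γ.rowLen 0) := by
  induction hL : γ.rowLen 0 using Nat.strong_induction_on generalizing γ with
  | _ L ih =>
  rcases Nat.eq_zero_or_pos L with rfl | hL0
  · refine SetLike.ext fun ⟨i, j⟩ =>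
      iff_of_false (fun h => ?_) (by rw [mem_selfConjThreeCore]; omega)
    have := mem_iff_lt_rowLen.mp (γ.up_left_mem (Nat.zero_le i) (Nat.zero_le j) h)
    omega
  have hrem := rowLen_zero_removeFirstHook_of_isTCore_three hT hcore
  refine ext_of_removeFirstHook ?_ ?_ ?_
  · rw [hL, rowLen_zero_selfConjThreeCore]
  · rw [colLen_eq_rowLen_of_transpose_eq hT, hL, colLen_zero_selfConjThreeCore]
  · rw [removeFirstHook_selfConjThreeCore, ← hL, ← hrem]
    exact ih _ (by omega) (by rw [transpose_removeFirstHook, hT]) hcore.removeFirstHook rfl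

theorem transpose_eq_self_and_isTCore_three_iff :
    γ.transpose = γ ∧ IsTCore γ 3 ↔ ∃ L, L % 3 ≠ 2 ∧ γ = selfConjThreeCore L := by
  constructor
  · rintro ⟨hT, hcore⟩
    exact ⟨γ.rowLen 0, rowLen_zero_mod_three_ne_two hT hcore,
      eq_selfConjThreeCore_of_isTCore_three hT hcore⟩
  · rintro ⟨L, hL, rfl⟩
    exact ⟨transpose_selfConjThreeCore L, isTCore_selfConjThreeCore hL⟩

end Classification

theorem exists_card_selfConjThreeCore_eq_iff {n : ℕ} (hn : 0 < n) :
    (∃ L, L % 3 ≠ 2 ∧ (selfConjThreeCore L).cells.card = n) ↔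
      ∃ r : ℕ, 1 ≤ r ∧ (n = r * (3 * r + 2) ∨ n = r * (3 * r - 2)) := by
  constructor
  · rintro ⟨L, hL, rfl⟩
    obtain ⟨r, rfl | rfl⟩ : ∃ r, L = 3 * r ∨ L = 3 * r + 1 := ⟨L / 3, by omega⟩
    · rw [card_selfConjThreeCore_three_mul] at hn ⊢
      exact ⟨r, Nat.pos_of_ne_zero (by rintro rfl; simp at hn), Or.inl rfl⟩
    · rw [card_selfConjThreeCore_three_mul_add_one]
      exact ⟨r + 1, by omega, Or.inr (by congr 1)⟩
  · rintro ⟨r, hr, rfl | rfl⟩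
    · exact ⟨3 * r, by omega, card_selfConjThreeCore_three_mul r⟩
    · obtain ⟨s, rfl⟩ : ∃ s, r = s + 1 := ⟨r - 1, by omega⟩
      exact ⟨3 * s + 1, by omega,
        (card_selfConjThreeCore_three_mul_add_one s).trans (by congr 1)⟩

theorem stmt13 (n : ℕ) (hn : 0 < n) :
    ((∃ r : ℕ, 1 ≤ r ∧ (n = r * (3 * r + 2) ∨ n = r * (3 * r - 2))) →
      Set.ncard {γ : YoungDiagram |
        γ.cells.card = n ∧ γ.transpose = γ ∧ IsTCore γ 3} = 1) ∧
    ((¬ ∃ r : ℕ, 1 ≤ r ∧ (n = r * (3 * r + 2) ∨ n = r * (3 * r - 2))) →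
      Set.ncard {γ : YoungDiagram |
        γ.cells.card = n ∧ γ.transpose = γ ∧ IsTCore γ 3} = 0) := by
  have hS : {γ : YoungDiagram | γ.cells.card = n ∧ γ.transpose = γ ∧ IsTCore γ 3} =
      {γ | ∃ L, L % 3 ≠ 2 ∧ (selfConjThreeCore L).cells.card = n ∧
        γ = selfConjThreeCore L} := by
    ext γ
    rw [Set.mem_ofPred_eq, Set.mem_ofPred_eq, transpose_eq_self_and_isTCore_three_iff]
    constructor
    · rintro ⟨rfl, L, hL, rfl⟩
      exact ⟨L, hL, rfl, rfl⟩
    · rintro ⟨L, hL, rfl, rfl⟩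
      exact ⟨rfl, L, hL, rfl⟩
  rw [hS, ← exists_card_selfConjThreeCore_eq_iff hn]
  refine ⟨fun ⟨L, hL, hcard⟩ => Set.ncard_eq_one.mpr ⟨selfConjThreeCore L, ?_⟩,
    fun h => ?_⟩
  · ext γ
    constructor
    · rintro ⟨L', -, hcard', rfl⟩
      rw [card_selfConjThreeCore_injective (hcard'.trans hcard.symm), Set.mem_singleton_iff]
    · rintro rfl
      exact ⟨L, hL, hcard, rfl⟩
  · convert Set.ncard_empty YoungDiagram
    exact Set.eq_empty_of_forall_notMem fun γ ⟨L, hL, hcard, _⟩ => h ⟨L, hL, hcard⟩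
end
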